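/- Let k ≥ 1, let R = ℂ[x,y]/(x^k), and let 0 = i_0 ≤ i_1 ≤ … ≤ i_{k−1} be natural numbers. Let g : R^k → R be the R-linear map sending the q-th standard basis vector e_q to the image of x^{k−q} y^{i_{q−1}} in R, for q = 1, …, k. Let N̄ : R^k → R^k be the R-linear map given by the k×k matrix over R with N̄_{p,p} = x, N̄_{p,p+1} = −y^{i_p − i_{p−1}}, and all other entries 0 (entries taken in R). Then the kernel of g equals the range of N̄; in particular, the image of g is the ideal I = (x^{k−1}, x^{k−2}y^{i_1}, …, x y^{i_{k−2}}, y^{i_{k−1}}) of R, and N̄ presents I. -/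
import Mathlib

set_option maxHeartbeats 1000000

open MvPolynomial

/-- The ring `R = ℂ[x,y]/(x^k)`. -/
abbrev Rquot (k : ℕ) :=
  MvPolynomial (Fin 2) ℂ ⧸ Ideal.span {(X 0 : MvPolynomial (Fin 2) ℂ) ^ k}

/-- The image `x̄` of `x` in `R = ℂ[x,y]/(x^k)`. -/
noncomputable def xbar (k : ℕ) : Rquot k :=
  Ideal.Quotient.mk (Ideal.span {(X 0 : MvPolynomial (Fin 2) ℂ) ^ k}) (X 0)

/-- The image `ȳ` of `y` in `R = ℂ[x,y]/(x^k)`. -/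
noncomputable def ybar (k : ℕ) : Rquot k :=
  Ideal.Quotient.mk (Ideal.span {(X 0 : MvPolynomial (Fin 2) ℂ) ^ k}) (X 1)

/-- Every 2-variable polynomial is `X0 * Q + (poly in X1)`. -/
lemma mv_decomp (P : MvPolynomial (Fin 2) ℂ) :
    ∃ (Q : MvPolynomial (Fin 2) ℂ) (p : Polynomial ℂ),
      P = X 0 * Q + Polynomial.aeval (X 1 : MvPolynomial (Fin 2) ℂ) p := by
  induction P using MvPolynomial.induction_on with
  | C a => exact ⟨0, Polynomial.C a, by simp⟩
  | add f g hf hg =>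
      obtain ⟨Qf, pf, hf⟩ := hf
      obtain ⟨Qg, pg, hg⟩ := hg
      exact ⟨Qf + Qg, pf + pg, by rw [hf, hg, map_add]; ring⟩
  | mul_X f i hf =>
      obtain ⟨Q, p, hf⟩ := hf
      fin_cases i
      · exact ⟨f, 0, by simp [mul_comm]⟩
      · refine ⟨Q * X 1, p * Polynomial.X, ?_⟩
        show f * X 1 = _
        rw [hf, map_mul, Polynomial.aeval_X]; ring

lemma key_inj (k : ℕ) (p : Fin k → Polynomial ℂ) (e : Fin k → ℕ)
    (h : (X 0 : MvPolynomial (Fin 2) ℂ) ^ k ∣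
      ∑ q : Fin k, Polynomial.aeval (X 1 : MvPolynomial (Fin 2) ℂ) (p q) * (X 1) ^ e q
        * (X 0) ^ (k - 1 - (q : ℕ))) :
    ∀ q, p q = 0 := by
  intro q0
  let φ := (finSuccEquiv ℂ 1 : MvPolynomial (Fin 2) ℂ ≃ₐ[ℂ] Polynomial (MvPolynomial (Fin 1) ℂ))
  have hX0 : φ ((X 0 : MvPolynomial (Fin 2) ℂ)) = Polynomial.X := finSuccEquiv_X_zero
  have hX1 : φ ((X 1 : MvPolynomial (Fin 2) ℂ)) = Polynomial.C (X 0) := finSuccEquiv_X_succ (j := 0)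
  have ha : ∀ q : Fin k, φ ((Polynomial.aeval (X 1 : MvPolynomial (Fin 2) ℂ)) (p q))
      = Polynomial.C ((Polynomial.aeval (X 0 : MvPolynomial (Fin 1) ℂ)) (p q)) := by
    intro q
    rw [← Polynomial.aeval_algHom_apply φ, hX1]
    exact Polynomial.aeval_algHom_apply Polynomial.CAlgHom (X 0) (p q)
  have hdvd : (Polynomial.X : Polynomial (MvPolynomial (Fin 1) ℂ)) ^ k ∣
      ∑ q : Fin k, Polynomial.C
          (Polynomial.aeval (X 0 : MvPolynomial (Fin 1) ℂ) (p q) * (X 0) ^ e q)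
        * Polynomial.X ^ (k - 1 - (q : ℕ)) := by
    obtain ⟨G, hG⟩ := h
    refine ⟨φ G, ?_⟩
    have h2 := congrArg φ hG
    rw [map_mul, map_pow, hX0, map_sum] at h2
    rw [← h2]
    refine Finset.sum_congr rfl fun q _ => ?_
    simp only [map_mul, map_pow, hX0, hX1, ha, Polynomial.C_pow]
  rw [Polynomial.X_pow_dvd_iff] at hdvd
  have hc := hdvd (k - 1 - (q0 : ℕ)) (by have := q0.is_lt; omega)
  rw [Polynomial.finset_sum_coeff] at hc
  rw [Fintype.sum_eq_single q0 (fun x hx => ?_)] at hc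
  · rw [Polynomial.coeff_C_mul, Polynomial.coeff_X_pow, if_pos rfl, mul_one] at hc
    have hxne : (X 0 : MvPolynomial (Fin 1) ℂ) ^ e q0 ≠ 0 :=
      pow_ne_zero _ (MvPolynomial.X_ne_zero 0)
    have hz : Polynomial.aeval (X 0 : MvPolynomial (Fin 1) ℂ) (p q0) = 0 :=
      (mul_eq_zero.mp hc).resolve_right hxne
    have := congrArg (MvPolynomial.aeval (fun _ : Fin 1 => (Polynomial.X : Polynomial ℂ))) hz
    rwa [← Polynomial.aeval_algHom_apply (MvPolynomial.aeval fun _ : Fin 1 => (Polynomial.X : Polynomial ℂ)),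
      MvPolynomial.aeval_X, Polynomial.aeval_X_left_apply, map_zero] at this
  · rw [Polynomial.coeff_C_mul, Polynomial.coeff_X_pow, if_neg, mul_zero]
    have h1 := x.is_lt
    have h2 := q0.is_lt
    have : (x : ℕ) ≠ (q0 : ℕ) := fun hh => hx (Fin.ext hh)
    omega

/-- Let `k ≥ 1`, `R = ℂ[x,y]/(x^k)`, and `0 = i_0 ≤ i_1 ≤ … ≤ i_{k−1}`
(recorded via `c : ℕ → ℕ`, `c 0 = 0`, weakly increasing on `{0,…,k−1}`).  Let
`g : R^k → R` send the (`0`-based) `q`-th basis vector to `x^(k−1−q) y^(c q)`, and let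
`N̄ : R^k → R^k` be given by the matrix with `N̄ p p = x`, `N̄ p (p+1) = −y^(c (p+1) − c p)`,
`0` otherwise.  Then `ker g = range N̄`; in particular `range g` is the ideal
`I = (x^(k−1), x^(k−2) y^(i_1), …, y^(i_{k−1}))`, and `N̄` presents `I`. -/
theorem presentation_exact_at_end (k : ℕ) (hk : 1 ≤ k) (c : ℕ → ℕ) (hc0 : c 0 = 0)
    (hmono : ∀ a b : ℕ, a ≤ b → b ≤ k - 1 → c a ≤ c b)
    (g : (Fin k → Rquot k) →ₗ[Rquot k] Rquot k)
    (hg : ∀ v : Fin k → Rquot k,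
      g v = ∑ q : Fin k, v q * (xbar k ^ (k - 1 - (q : ℕ)) * ybar k ^ (c q)))
    (Nmat : Matrix (Fin k) (Fin k) (Rquot k))
    (hN : ∀ p q : Fin k, Nmat p q =
      if (q : ℕ) = (p : ℕ) then xbar k
      else if (q : ℕ) = (p : ℕ) + 1 then -(ybar k ^ (c q - c p))
      else 0) :
    LinearMap.ker g = LinearMap.range Nmat.mulVecLin ∧
    LinearMap.range g =
      Ideal.span (Set.range fun q : Fin k => xbar k ^ (k - 1 - (q : ℕ)) * ybar k ^ (c q)) := by
  set Ik : Ideal (MvPolynomial (Fin 2) ℂ) :=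
    Ideal.span {(X 0 : MvPolynomial (Fin 2) ℂ) ^ k} with hIk
  set mk := Ideal.Quotient.mk Ik with hmk
  set a : Fin k → Rquot k := fun q => xbar k ^ (k - 1 - (q : ℕ)) * ybar k ^ (c q) with ha
  set ψ : Polynomial ℂ → Rquot k :=
    fun p => mk (Polynomial.aeval (X 1 : MvPolynomial (Fin 2) ℂ) p) with hψ
  have hxk : xbar k ^ k = 0 := by
    rw [xbar, ← map_pow, Ideal.Quotient.eq_zero_iff_mem]
    exact Ideal.subset_span rfl
  -- row formula for the matrix
  have hrow : ∀ (w : Fin k → Rquot k) (p : Fin k), Nmat.mulVec w p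
      = xbar k * w p + (if h : (p : ℕ) + 1 < k
          then -(ybar k ^ (c ((p : ℕ) + 1) - c (p : ℕ))) * w ⟨(p : ℕ) + 1, h⟩ else 0) := by
    intro w p
    have hsum : Nmat.mulVec w p = ∑ q : Fin k, Nmat p q * w q := by
      simp [Matrix.mulVec, dotProduct]
    rw [hsum]
    by_cases h : (p : ℕ) + 1 < k
    · rw [dif_pos h]
      rw [Fintype.sum_eq_add p ⟨(p : ℕ) + 1, h⟩ (by simp [Fin.ext_iff]) (fun x hx => ?_)]
      · rw [hN, hN, if_pos rfl, if_neg (show ¬((p : ℕ) + 1 = (p : ℕ)) by omega), if_pos rfl]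
      · obtain ⟨hx1, hx2⟩ := hx
        rw [hN, if_neg (fun hc => hx1 (Fin.ext hc)),
          if_neg (fun hc => hx2 (Fin.ext hc)), zero_mul]
    · rw [dif_neg h, add_zero]
      rw [Fintype.sum_eq_single p (fun x hx => ?_)]
      · rw [hN, if_pos rfl]
      · have := x.is_lt
        rw [hN, if_neg (fun hc => hx (Fin.ext hc)), if_neg (by omega), zero_mul]
  -- columns are in the kernel
  have hcol : ∀ q : Fin k, ∑ p : Fin k, Nmat p q * a p = 0 := by
    intro q
    by_cases hq : (q : ℕ) = 0
    · rw [Fintype.sum_eq_single q (fun x hx => ?_)]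
      · rw [hN, if_pos rfl, ha]
        simp only [hq, hc0, Nat.sub_zero, pow_zero, mul_one]
        rw [← pow_succ', show k - 1 + 1 = k by omega, hxk]
      · have := x.is_lt
        rw [hN, if_neg (fun hc => hx (Fin.ext hc.symm)), if_neg (by omega), zero_mul]
    · obtain ⟨j, hj⟩ : ∃ j, (q : ℕ) = j + 1 := ⟨(q : ℕ) - 1, by omega⟩
      have hjk : j < k := by have := q.is_lt; omega
      have hne : q ≠ (⟨j, hjk⟩ : Fin k) := by simp [Fin.ext_iff]; omega
      have hq1 : j + 1 ≤ k - 1 := by have := q.is_lt; omega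
      have e1 : xbar k * xbar k ^ (k - 1 - (j + 1)) = xbar k ^ (k - 1 - j) := by
        rw [← pow_succ']; congr 1; omega
      have e2 : ybar k ^ (c (j + 1) - c j) * ybar k ^ (c j) = ybar k ^ (c (j + 1)) := by
        rw [← pow_add]; congr 1
        have := hmono j (j + 1) (by omega) hq1; omega
      rw [Fintype.sum_eq_add q ⟨j, hjk⟩ hne (fun x hx => ?_)]
      · rw [hN, hN, if_pos rfl, if_neg (show ¬((q : ℕ) = j) by omega),
          if_pos (show (q : ℕ) = j + 1 from hj)]
        show xbar k * (xbar k ^ (k - 1 - (q : ℕ)) * ybar k ^ (c (q : ℕ)))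
            + -(ybar k ^ (c (q : ℕ) - c j)) * (xbar k ^ (k - 1 - j) * ybar k ^ (c j)) = 0
        rw [hj]
        calc xbar k * (xbar k ^ (k - 1 - (j + 1)) * ybar k ^ (c (j + 1)))
              + -(ybar k ^ (c (j + 1) - c j)) * (xbar k ^ (k - 1 - j) * ybar k ^ (c j))
            = (xbar k * xbar k ^ (k - 1 - (j + 1))) * ybar k ^ (c (j + 1))
              - xbar k ^ (k - 1 - j) * (ybar k ^ (c (j + 1) - c j) * ybar k ^ (c j)) := by ring
          _ = 0 := by rw [e1, e2]; ring
      · have hx1 : ¬((q : ℕ) = (x : ℕ)) := fun hc => hx.1 (Fin.ext hc.symm)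
        have hx2 : ¬((q : ℕ) = (x : ℕ) + 1) := by
          intro hc
          exact hx.2 (Fin.ext (show (x : ℕ) = j by omega))
        rw [hN, if_neg hx1, if_neg hx2, zero_mul]
  -- g kills the image of N
  have hgN : ∀ w : Fin k → Rquot k, g (Nmat.mulVecLin w) = 0 := by
    intro w
    rw [hg]
    calc ∑ p : Fin k, Nmat.mulVecLin w p * a p
        = ∑ p : Fin k, ∑ q : Fin k, Nmat p q * a p * w q := by
          refine Finset.sum_congr rfl fun p _ => ?_
          rw [Matrix.mulVecLin_apply]
          have hmv : Nmat.mulVec w p = ∑ q : Fin k, Nmat p q * w q := by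
            simp [Matrix.mulVec, dotProduct]
          rw [hmv, Finset.sum_mul]
          exact Finset.sum_congr rfl fun q _ => by ring
      _ = ∑ q : Fin k, ∑ p : Fin k, Nmat p q * a p * w q := Finset.sum_comm
      _ = ∑ q : Fin k, (∑ p : Fin k, Nmat p q * a p) * w q := by
          exact Finset.sum_congr rfl fun q _ => (Finset.sum_mul _ _ _).symm
      _ = 0 := by
          refine Finset.sum_eq_zero fun q _ => ?_
          rw [hcol q, zero_mul]
  -- division with remainder by x in Rquot
  have hdec : ∀ r : Rquot k, ∃ (s : Rquot k) (pr : Polynomial ℂ),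
      r = xbar k * s + ψ pr := by
    intro r
    obtain ⟨P, rfl⟩ := Ideal.Quotient.mk_surjective (I := Ik) r
    obtain ⟨Q, pr, hP⟩ := mv_decomp P
    exact ⟨mk Q, pr, by rw [hP, map_add, map_mul]; rfl⟩
  -- every vector decomposes as N w + (polynomials in y)
  have hD : ∀ v : Fin k → Rquot k, ∃ (w : Fin k → Rquot k) (pp : Fin k → Polynomial ℂ),
      v = Nmat.mulVec w + fun q => ψ (pp q) := by
    intro v
    choose ds dp hd using hdec
    let vn : ℕ → Rquot k := fun n => if h : n < k then v ⟨n, h⟩ else 0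
    have hvn : ∀ (n : ℕ) (h : n < k), vn n = v ⟨n, h⟩ := fun n h => dif_pos h
    let In : ℕ → Rquot k := fun j =>
      Nat.rec (vn (k - 1))
        (fun j prev => vn (k - 2 - j) + ybar k ^ (c (k - 1 - j) - c (k - 2 - j)) * ds prev) j
    have hIn0 : In 0 = vn (k - 1) := rfl
    have hInS : ∀ j : ℕ,
        In (j + 1) = vn (k - 2 - j) + ybar k ^ (c (k - 1 - j) - c (k - 2 - j)) * ds (In j) :=
      fun j => rfl
    refine ⟨fun p => ds (In (k - 1 - (p : ℕ))), fun p => dp (In (k - 1 - (p : ℕ))), ?_⟩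
    funext p
    rw [Pi.add_apply, hrow]
    by_cases h : (p : ℕ) + 1 < k
    · rw [dif_pos h]
      have hw : ds (In (k - 1 - ((⟨(p : ℕ) + 1, h⟩ : Fin k) : ℕ)))
          = ds (In (k - 2 - (p : ℕ))) := by
        have hco : ((⟨(p : ℕ) + 1, h⟩ : Fin k) : ℕ) = (p : ℕ) + 1 := rfl
        rw [hco, show k - 1 - ((p : ℕ) + 1) = k - 2 - (p : ℕ) by omega]
      have hIn : In (k - 1 - (p : ℕ))
          = v p + ybar k ^ (c ((p : ℕ) + 1) - c (p : ℕ)) * ds (In (k - 2 - (p : ℕ))) := by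
        rw [show k - 1 - (p : ℕ) = (k - 2 - (p : ℕ)) + 1 by omega, hInS,
          show k - 2 - (k - 2 - (p : ℕ)) = (p : ℕ) by omega,
          show k - 1 - (k - 2 - (p : ℕ)) = (p : ℕ) + 1 by omega, hvn _ p.is_lt]
      have hd1 : v p + ybar k ^ (c ((p : ℕ) + 1) - c (p : ℕ)) * ds (In (k - 2 - (p : ℕ)))
          = xbar k * ds (In (k - 1 - (p : ℕ))) + ψ (dp (In (k - 1 - (p : ℕ)))) := by
        rw [← hIn]
        exact hd (In (k - 1 - (p : ℕ)))
      show v p = xbar k * ds (In (k - 1 - (p : ℕ)))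
          + -(ybar k ^ (c ((p : ℕ) + 1) - c (p : ℕ)))
            * ds (In (k - 1 - ((⟨(p : ℕ) + 1, h⟩ : Fin k) : ℕ)))
          + ψ (dp (In (k - 1 - (p : ℕ))))
      rw [hw]
      linear_combination hd1
    · rw [dif_neg h, add_zero]
      have hp : (p : ℕ) = k - 1 := by have := p.is_lt; omega
      have hk1 : k - 1 < k := by omega
      have hpe : p = ⟨k - 1, hk1⟩ := Fin.ext hp
      have hIn : In (k - 1 - (p : ℕ)) = v p := by
        rw [show k - 1 - (p : ℕ) = 0 by omega, hIn0, hvn (k - 1) hk1, hpe]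
      have hd1 : v p = xbar k * ds (In (k - 1 - (p : ℕ))) + ψ (dp (In (k - 1 - (p : ℕ)))) := by
        rw [← hIn]
        exact hd (In (k - 1 - (p : ℕ)))
      exact hd1
  constructor
  · -- kernel = range of N
    apply le_antisymm
    · intro v hv
      obtain ⟨w, pp, hvw⟩ := hD v
      have hmvl : Nmat.mulVec w = Nmat.mulVecLin w := rfl
      have hgt : g (fun q => ψ (pp q)) = 0 := by
        have h1 := congrArg g hvw
        rw [hmvl, map_add] at h1
        rw [LinearMap.mem_ker.mp hv, hgN w, zero_add] at h1
        exact h1.symm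
      have hppz : ∀ q, pp q = 0 := by
        rw [hg] at hgt
        have hsum : mk (∑ q : Fin k,
            Polynomial.aeval (X 1 : MvPolynomial (Fin 2) ℂ) (pp q) * (X 1) ^ (c (q : ℕ))
              * (X 0) ^ (k - 1 - (q : ℕ))) = 0 := by
          rw [map_sum, ← hgt]
          refine Finset.sum_congr rfl fun q _ => ?_
          rw [map_mul, map_mul, map_pow, map_pow]
          show mk (Polynomial.aeval (X 1 : MvPolynomial (Fin 2) ℂ) (pp q))
              * ybar k ^ (c (q : ℕ)) * xbar k ^ (k - 1 - (q : ℕ)) = _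
          ring
        rw [Ideal.Quotient.eq_zero_iff_mem, hIk, Ideal.mem_span_singleton] at hsum
        exact key_inj k pp (fun q => c (q : ℕ)) hsum
      refine LinearMap.mem_range.mpr ⟨w, ?_⟩
      rw [← hmvl, hvw]
      have : (fun q => ψ (pp q)) = (0 : Fin k → Rquot k) := by
        funext q
        rw [hppz q, hψ]
        simp
      rw [this, add_zero]
    · rintro v ⟨w, rfl⟩
      exact LinearMap.mem_ker.mpr (hgN w)
  · -- range of g is the ideal
    apply le_antisymm
    · rintro r ⟨v, rfl⟩
      rw [hg]
      refine Submodule.sum_mem _ fun q _ => ?_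
      exact Ideal.mul_mem_left _ _ (Ideal.subset_span ⟨q, rfl⟩)
    · rw [Ideal.span_le]
      rintro r ⟨q, rfl⟩
      refine ⟨Pi.single q 1, ?_⟩
      rw [hg, Fintype.sum_eq_single q (fun x hx => by
        rw [Pi.single_eq_of_ne hx, zero_mul]), Pi.single_eq_same, one_mul]
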